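/- arXiv:1104.0646 — 2 statements merged into one kernel-verified Lean document; each statement's English description precedes it below -/
import Mathlib

section
/- Relative categories, relative functors, and relative natural transformations (morphisms in the localization of the functor category at pointwise weak equivalences) form a 2-category RelCat. -/
open CategoryTheory CategoryTheory.Limits

universe u

namespace Paper

/-- A functor preserves weak equivalences (is a relative functor). -/
def PresW {C D : Type*} [Category C] [Category D]
    (WC : MorphismProperty C) (WD : MorphismProperty D) (F : C ⥤ D) : Prop :=
  ∀ ⦃X Y : C⦄ (f : X ⟶ Y), WC f → WD (F.map f)

/-- A bundled relative category: a category together with a saturated class of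
weak equivalences. -/
structure RelCatB : Type (u + 1) where
  C : Type u
  [cat : Category.{u} C]
  W : MorphismProperty C
  saturated : W = (MorphismProperty.isomorphisms W.Localization).inverseImage W.Q

attribute [instance] RelCatB.cat

/-- The type of relative functors between bundled relative categories. -/
abbrev RelFunB (A B : RelCatB.{u}) : Type u :=
  ObjectProperty.FullSubcategory (fun F : A.C ⥤ B.C => PresW A.W B.W F)

/-- The pointwise weak equivalences on the category of relative functors. -/
def relPtB (A B : RelCatB.{u}) : MorphismProperty (RelFunB A B) :=
  fun _ _ τ => ∀ X : A.C, B.W (τ.hom.app X)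

/-- The quiver structure on relative categories: 1-morphisms are relative functors. -/
def relQuiver : Quiver RelCatB.{u} := ⟨fun A B => RelFunB A B⟩

/-- The hom-categories of `RelCat`: the category of relative functors with morphisms the
relative natural transformations, i.e. the morphisms between the corresponding objects of
the localization of the relative functor category at the pointwise weak equivalences. -/
noncomputable def relHomCategory (A B : RelCatB.{u}) : Category.{u} (RelFunB A B) where
  Hom F G := (relPtB A B).Q.obj F ⟶ (relPtB A B).Q.obj G
  id F := 𝟙 ((relPtB A B).Q.obj F)
  comp {F G H} f g :=
    (show (relPtB A B).Q.obj F ⟶ (relPtB A B).Q.obj G from f) ≫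
      (show (relPtB A B).Q.obj G ⟶ (relPtB A B).Q.obj H from g)
  id_comp := fun {F G} f =>
    Category.id_comp (show (relPtB A B).Q.obj F ⟶ (relPtB A B).Q.obj G from f)
  comp_id := fun {F G} f =>
    Category.comp_id (show (relPtB A B).Q.obj F ⟶ (relPtB A B).Q.obj G from f)
  assoc := fun {F G H K} f g h =>
    Category.assoc (show (relPtB A B).Q.obj F ⟶ (relPtB A B).Q.obj G from f)
      (show (relPtB A B).Q.obj G ⟶ (relPtB A B).Q.obj H from g)
      (show (relPtB A B).Q.obj H ⟶ (relPtB A B).Q.obj K from h)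

end Paper

/-!
Composition of relative functors is strictly associative and unital, so all the work lies in
the whiskerings. Pre- and postcomposition with a relative functor preserve pointwise weak
equivalences, hence descend to functors between the localized hom-categories; the universal
property of the localization makes these descended functors compose strictly. The interchange
law holds for genuine natural transformations and extends to the localization, because a family
of maps that is natural with respect to the morphisms of `C` is natural with respect to all
morphisms of `C[W⁻¹]`.
-/

namespace Paper

section Localization

open Localization.Construction

variable {C D E : Type*} [Category C] [Category D] [Category E]
  {W : MorphismProperty C} {W' : MorphismProperty D} {W'' : MorphismProperty E}

noncomputable def localizationMap (Φ : C ⥤ D) (hΦ : W ≤ W'.inverseImage Φ) :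
    W.Localization ⥤ W'.Localization :=
  lift (Φ ⋙ W'.Q) fun _ _ _ hf => W'.Q_inverts _ (hΦ _ hf)

lemma localizationMap_fac (Φ : C ⥤ D) (hΦ : W ≤ W'.inverseImage Φ) :
    W.Q ⋙ localizationMap Φ hΦ = Φ ⋙ W'.Q :=
  fac _ _

lemma localizationMap_map_Q (Φ : C ⥤ D) (hΦ : W ≤ W'.inverseImage Φ) {X Y : C} (f : X ⟶ Y) :
    (localizationMap Φ hΦ).map (W.Q.map f) = W'.Q.map (Φ.map f) :=
  (Functor.congr_hom (localizationMap_fac Φ hΦ) f).trans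
    ((Category.id_comp _).trans (Category.comp_id _))

lemma localizationMap_id : localizationMap (𝟭 C) (W := W) le_rfl = 𝟭 _ :=
  uniq _ _ (localizationMap_fac _ _)

lemma localizationMap_comp (Φ : C ⥤ D) (Ψ : D ⥤ E) (hΦ : W ≤ W'.inverseImage Φ)
    (hΨ : W' ≤ W''.inverseImage Ψ) :
    localizationMap (Φ ⋙ Ψ) (fun _ _ _ hf => hΨ _ (hΦ _ hf)) =
      localizationMap Φ hΦ ⋙ localizationMap Ψ hΨ :=
  uniq _ _ <| calc
    W.Q ⋙ localizationMap (Φ ⋙ Ψ) _ = Φ ⋙ Ψ ⋙ W''.Q := localizationMap_fac _ _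
    _ = Φ ⋙ W'.Q ⋙ localizationMap Ψ hΨ := by rw [localizationMap_fac]
    _ = W.Q ⋙ localizationMap Φ hΦ ⋙ localizationMap Ψ hΨ := by
      rw [← Functor.assoc, ← localizationMap_fac Φ hΦ, Functor.assoc]

lemma naturality_of_naturality_Q {F G : W.Localization ⥤ E}
    (app : ∀ X : C, F.obj (W.Q.obj X) ⟶ G.obj (W.Q.obj X))
    (happ : ∀ ⦃X Y : C⦄ (f : X ⟶ Y), F.map (W.Q.map f) ≫ app Y = app X ≫ G.map (W.Q.map f))
    {X Y : C} (θ : W.Q.obj X ⟶ W.Q.obj Y) : F.map θ ≫ app Y = app X ≫ G.map θ := by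
  simpa using (natTransExtension (F₁ := F) (F₂ := G) ⟨app, happ⟩).naturality θ

end Localization

section RelFun

variable {a b c d : RelCatB.{u}}

def relId (a : RelCatB.{u}) : RelFunB a a :=
  ⟨𝟭 a.C, fun _ _ _ hf => hf⟩

def relComp (F : RelFunB a b) (G : RelFunB b c) : RelFunB a c :=
  ⟨F.obj ⋙ G.obj, fun _ _ f hf => G.property _ (F.property f hf)⟩

def precomp (F : RelFunB a b) : RelFunB b c ⥤ RelFunB a c where
  obj H := relComp F H
  map τ := ObjectProperty.homMk (Functor.whiskerLeft F.obj τ.hom)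

def postcomp (H : RelFunB b c) : RelFunB a b ⥤ RelFunB a c where
  obj F := relComp F H
  map τ := ObjectProperty.homMk (Functor.whiskerRight τ.hom H.obj)

lemma relPtB_le_inverseImage_precomp (F : RelFunB a b) :
    relPtB b c ≤ (relPtB a c).inverseImage (precomp F) :=
  fun _ _ _ hτ X => hτ (F.obj.obj X)

lemma relPtB_le_inverseImage_postcomp (H : RelFunB b c) :
    relPtB a b ≤ (relPtB a c).inverseImage (postcomp H) :=
  fun _ _ _ hτ X => H.property _ (hτ X)

noncomputable abbrev locPrecomp (F : RelFunB a b) :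
    (relPtB b c).Localization ⥤ (relPtB a c).Localization :=
  localizationMap (precomp F) (relPtB_le_inverseImage_precomp F)

noncomputable abbrev locPostcomp (H : RelFunB b c) :
    (relPtB a b).Localization ⥤ (relPtB a c).Localization :=
  localizationMap (postcomp H) (relPtB_le_inverseImage_postcomp H)

lemma locPrecomp_relId : locPrecomp (relId a) = 𝟭 (relPtB a b).Localization :=
  localizationMap_id

lemma locPostcomp_relId : locPostcomp (relId b) = 𝟭 (relPtB a b).Localization :=
  localizationMap_id

lemma locPrecomp_relComp (F : RelFunB a b) (G : RelFunB b c) :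
    locPrecomp (c := d) (relComp F G) = locPrecomp G ⋙ locPrecomp F :=
  localizationMap_comp (precomp G) (precomp F) _ _

lemma locPostcomp_relComp (G : RelFunB b c) (H : RelFunB c d) :
    locPostcomp (a := a) (relComp G H) = locPostcomp G ⋙ locPostcomp H :=
  localizationMap_comp (postcomp G) (postcomp H) _ _

lemma locPrecomp_comp_locPostcomp (F : RelFunB a b) (H : RelFunB c d) :
    locPrecomp F ⋙ locPostcomp H = locPostcomp H ⋙ locPrecomp F := by
  rw [← localizationMap_comp, ← localizationMap_comp]
  rfl

lemma locPrecomp_map_comp_locPostcomp_map {F G : RelFunB a b} {H K : RelFunB b c}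
    (η : (relPtB a b).Q.obj F ⟶ (relPtB a b).Q.obj G)
    (θ : (relPtB b c).Q.obj H ⟶ (relPtB b c).Q.obj K) :
    (locPrecomp F).map θ ≫ (locPostcomp K).map η =
      (locPostcomp H).map η ≫ (locPrecomp G).map θ := by
  refine naturality_of_naturality_Q (F := locPrecomp F) (G := locPrecomp G)
    (fun H' => (locPostcomp H').map η) (fun H' K' g => ?_) θ
  rw [localizationMap_map_Q, localizationMap_map_Q]
  refine (naturality_of_naturality_Q (F := locPostcomp H') (G := locPostcomp K')
    (fun F' => (relPtB a c).Q.map ((precomp F').map g)) (fun F' G' τ => ?_) η).symm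
  rw [localizationMap_map_Q, localizationMap_map_Q]
  refine ((relPtB a c).Q.map_comp _ _).symm.trans (.trans ?_ ((relPtB a c).Q.map_comp _ _))
  congr 1
  ext X
  exact g.hom.naturality (τ.hom.app X)

end RelFun

-- Associators and unitors are identities; the coherence axioms then hold definitionally.
noncomputable def relBicategory : Bicategory.{u, u, u + 1} RelCatB.{u} where
  Hom a b := RelFunB a b
  id := relId
  comp := relComp
  homCategory := relHomCategory
  whiskerLeft f _ _ η := (locPrecomp f).map η
  whiskerRight η h := (locPostcomp h).map η
  associator f g h := @Iso.refl _ (relHomCategory _ _) (relComp (relComp f g) h)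
  leftUnitor f := @Iso.refl _ (relHomCategory _ _) f
  rightUnitor f := @Iso.refl _ (relHomCategory _ _) f
  whiskerLeft_id f _ := (locPrecomp f).map_id _
  whiskerLeft_comp f _ _ _ η θ := (locPrecomp f).map_comp η θ
  id_whiskerLeft η := Functor.congr_hom locPrecomp_relId η
  comp_whiskerLeft f g _ _ η := Functor.congr_hom (locPrecomp_relComp f g) η
  id_whiskerRight _ g := (locPostcomp g).map_id _
  comp_whiskerRight η θ i := (locPostcomp i).map_comp η θ
  whiskerRight_id η := Functor.congr_hom locPostcomp_relId η
  whiskerRight_comp η g h := Functor.congr_hom (locPostcomp_relComp g h) η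
  whisker_assoc f _ _ η h := Functor.congr_hom (locPrecomp_comp_locPostcomp f h) η
  whisker_exchange η θ := locPrecomp_map_comp_locPostcomp_map η θ
  pentagon _ _ _ _ := rfl
  triangle _ _ := rfl

theorem relCat_is_two_category :
    ∃ B : Bicategory.{u, u, u + 1} RelCatB.{u},
      B.toCategoryStruct.toQuiver = relQuiver.{u} ∧
        HEq (@Bicategory.homCategory RelCatB.{u} B) relHomCategory.{u} :=
  ⟨relBicategory, rfl, .rfl⟩

end Paper
end

section
/- The localization of a relative adjunction F : (C,W) ⇄ (D,W) : G yields an ordinary adjunction F ⊣ G between the localized categories C[W⁻¹] and D[W⁻¹]. -/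
open CategoryTheory CategoryTheory.Limits

namespace Paper

/-- A class of morphisms is saturated: it is the preimage of the isomorphisms under the
localization functor. -/
def Saturated {C : Type*} [Category C] (W : MorphismProperty C) : Prop :=
  W = (MorphismProperty.isomorphisms W.Localization).inverseImage W.Q

/-- The category of relative functors `(C, WC) ⟶ (D, WD)` (a full subcategory of `C ⥤ D`). -/
abbrev RelFun (C D : Type*) [Category C] [Category D]
    (WC : MorphismProperty C) (WD : MorphismProperty D) :=
  ObjectProperty.FullSubcategory (fun F : C ⥤ D => PresW WC WD F)

/-- Pointwise weak equivalences on the category of relative functors.  Relative natural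
transformations `F ⇢ G` are the morphisms `Q.obj F ⟶ Q.obj G` in the localization of the
category of relative functors at this class. -/
def relPt {C D : Type*} [Category C] [Category D]
    (WC : MorphismProperty C) (WD : MorphismProperty D) :
    MorphismProperty (RelFun C D WC WD) :=
  fun _ _ τ => ∀ X : C, WD (τ.hom.app X)

/-- Descending a weak-equivalence preserving functor to localizations. -/
noncomputable def descend {C' D' : Type*} [Category C'] [Category D']
    (P : MorphismProperty C') (P' : MorphismProperty D') (T : C' ⥤ D') (hT : PresW P P' T) :
    P.Localization ⥤ P'.Localization :=
  Localization.Construction.lift (T ⋙ P'.Q)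
    (fun _ _ f hf => Localization.inverts P'.Q P' _ (hT f hf))

section whisker

variable {C D E : Type*} [Category C] [Category D] [Category E]
  (WC : MorphismProperty C) (WD : MorphismProperty D) (WE : MorphismProperty E)

/-- Postcomposition with a relative functor, on relative functor categories. -/
def postcompF (K : D ⥤ E) (hK : PresW WD WE K) :
    RelFun C D WC WD ⥤ RelFun C E WC WE where
  obj T := ⟨T.1 ⋙ K, fun _ _ _ hf => hK _ (T.2 _ hf)⟩
  map τ := ⟨Functor.whiskerRight τ.hom K⟩
  map_id := by
    intro T
    apply InducedCategory.hom_ext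
    apply NatTrans.ext
    funext X
    exact K.map_id _
  map_comp := by
    intro T T' T'' f g
    apply InducedCategory.hom_ext
    apply NatTrans.ext
    funext X
    exact K.map_comp _ _

/-- Precomposition with a relative functor, on relative functor categories. -/
def precompF (K : E ⥤ C) (hK : PresW WE WC K) :
    RelFun C D WC WD ⥤ RelFun E D WE WD where
  obj T := ⟨K ⋙ T.1, fun _ _ _ hf => T.2 _ (hK _ hf)⟩
  map τ := ⟨Functor.whiskerLeft K τ.hom⟩
  map_id := by
    intro T
    apply InducedCategory.hom_ext
    apply NatTrans.ext
    funext X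
    rfl
  map_comp := by
    intro T T' T'' f g
    apply InducedCategory.hom_ext
    apply NatTrans.ext
    funext X
    rfl

/-- Postcomposition with a relative functor, descended to relative natural transformations. -/
noncomputable def postcompLoc (K : D ⥤ E) (hK : PresW WD WE K) :
    (relPt WC WD).Localization ⥤ (relPt WC WE).Localization :=
  descend _ _ (postcompF WC WD WE K hK) (fun _ _ τ hτ X => hK _ (hτ X))

/-- Precomposition with a relative functor, descended to relative natural transformations. -/
noncomputable def precompLoc (K : E ⥤ C) (hK : PresW WE WC K) :
    (relPt WC WD).Localization ⥤ (relPt WE WD).Localization :=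
  descend _ _ (precompF WC WD WE K hK) (fun _ _ τ hτ X => hτ _)

end whisker

/-- A relative adjunction: an adjunction in the 2-category of relative categories.  The
unit and counit are relative natural transformations, i.e. morphisms in the localizations of
the relative functor categories at the pointwise weak equivalences, and they satisfy the
triangle identities there. -/
structure RelAdjunction {C D : Type*} [Category C] [Category D]
    (WC : MorphismProperty C) (WD : MorphismProperty D)
    (F : C ⥤ D) (G : D ⥤ C) (hF : PresW WC WD F) (hG : PresW WD WC G) where
  /-- the counit `α : FG ⇢ 1_D` -/
  α : (relPt WD WD).Q.obj ⟨G ⋙ F, fun _ _ _ hf => hF _ (hG _ hf)⟩ ⟶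
      (relPt WD WD).Q.obj ⟨𝟭 D, fun _ _ _ hf => hf⟩
  /-- the unit `β : 1_C ⇢ GF` -/
  β : (relPt WC WC).Q.obj ⟨𝟭 C, fun _ _ _ hf => hf⟩ ⟶
      (relPt WC WC).Q.obj ⟨F ⋙ G, fun _ _ _ hf => hG _ (hF _ hf)⟩
  triangle_F :
    (postcompLoc WC WC WD F hF).map β ≫ (precompLoc WD WD WC F hF).map α =
      𝟙 ((relPt WC WD).Q.obj ⟨F, hF⟩)
  triangle_G :
    (precompLoc WC WC WD G hG).map β ≫ (postcompLoc WD WD WC G hG).map α =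
      𝟙 ((relPt WD WC).Q.obj ⟨G, hG⟩)

end Paper

/-!
Composing a relative functor `T` with the localization functor `Q` inverts the pointwise weak
equivalences, so `T ↦ T ⋙ Q` descends to a functor `compQLoc` taking relative natural
transformations to honest natural transformations of functors into the localization. It turns
postcomposition with a relative functor `K` into whiskering by the descended functor and
precomposition with `K` into whiskering by `K`, so it sends the triangle identities of the
relative adjunction to the triangle identities at all objects `Q X`. Every object of a
localization is of this form, and the unit and counit extend from them to the localized
categories.
-/

namespace Paper

section descend

variable {A B E E' : Type*} [Category A] [Category B] [Category E] [Category E']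
  (P : MorphismProperty A) (P' : MorphismProperty B) (T : A ⥤ B) (hT : PresW P P' T)

lemma descend_fac : P.Q ⋙ descend P P' T hT = T ⋙ P'.Q :=
  Localization.Construction.fac _ _

lemma descend_comp_eq {L : P.Localization ⥤ E} {L' : P'.Localization ⥤ E'} {Ψ : E ⥤ E'}
    (h : T ⋙ P'.Q ⋙ L' = P.Q ⋙ L ⋙ Ψ) : descend P P' T hT ⋙ L' = L ⋙ Ψ :=
  Localization.Construction.uniq _ _ <| by
    rw [← Functor.assoc, descend_fac, Functor.assoc, h]

end descend

section compQ

variable {C D E : Type*} [Category C] [Category D] [Category E]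
  (WC : MorphismProperty C) (WD : MorphismProperty D) (WE : MorphismProperty E)

noncomputable def compQ : RelFun C D WC WD ⥤ (C ⥤ WD.Localization) :=
  ObjectProperty.ι _ ⋙ (Functor.whiskeringRight C D WD.Localization).obj WD.Q

lemma relPt_isInvertedBy_compQ : (relPt WC WD).IsInvertedBy (compQ WC WD) :=
  fun _ _ τ hτ =>
    have : ∀ X, IsIso (((compQ WC WD).map τ).app X) := fun X =>
      Localization.inverts WD.Q WD _ (hτ X)
    NatIso.isIso_of_isIso_app _

noncomputable def compQLoc : (relPt WC WD).Localization ⥤ (C ⥤ WD.Localization) :=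
  Localization.Construction.lift (compQ WC WD) (relPt_isInvertedBy_compQ WC WD)

lemma compQLoc_fac : (relPt WC WD).Q ⋙ compQLoc WC WD = compQ WC WD :=
  Localization.Construction.fac _ _

lemma postcompLoc_comp_compQLoc (K : D ⥤ E) (hK : PresW WD WE K) :
    postcompLoc WC WD WE K hK ⋙ compQLoc WC WE =
    compQLoc WC WD ⋙ (Functor.whiskeringRight C _ _).obj (descend WD WE K hK) := by
  apply descend_comp_eq
  rw [compQLoc_fac, ← Functor.assoc, compQLoc_fac]
  refine CategoryTheory.Functor.ext (fun T : RelFun C D WC WD => ?_)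
  show (T.obj ⋙ K) ⋙ WE.Q = (T.obj ⋙ WD.Q) ⋙ descend WD WE K hK
  rw [Functor.assoc, Functor.assoc, descend_fac]

lemma compQLoc_map_postcompLoc_map_app (K : D ⥤ E) (hK : PresW WD WE K)
    {T T' : (relPt WC WD).Localization} (τ : T ⟶ T') (X : C) :
    ((compQLoc WC WE).map ((postcompLoc WC WD WE K hK).map τ)).app X =
      (descend WD WE K hK).map (((compQLoc WC WD).map τ).app X) :=
  NatTrans.congr_app
    (eq_of_heq (Functor.hcongr_hom (postcompLoc_comp_compQLoc WC WD WE K hK) τ)) X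

lemma precompLoc_comp_compQLoc (K : E ⥤ C) (hK : PresW WE WC K) :
    precompLoc WC WD WE K hK ⋙ compQLoc WE WD =
      compQLoc WC WD ⋙ (Functor.whiskeringLeft E C _).obj K := by
  apply descend_comp_eq
  rw [compQLoc_fac, ← Functor.assoc, compQLoc_fac]
  rfl

lemma compQLoc_map_precompLoc_map_app (K : E ⥤ C) (hK : PresW WE WC K)
    {T T' : (relPt WC WD).Localization} (τ : T ⟶ T') (X : E) :
    ((compQLoc WE WD).map ((precompLoc WC WD WE K hK).map τ)).app X =
      ((compQLoc WC WD).map τ).app (K.obj X) :=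
  NatTrans.congr_app
    (eq_of_heq (Functor.hcongr_hom (precompLoc_comp_compQLoc WC WD WE K hK) τ)) X

end compQ

namespace RelAdjunction

variable {C D : Type*} [Category C] [Category D] {WC : MorphismProperty C}
  {WD : MorphismProperty D} {F : C ⥤ D} {G : D ⥤ C} {hF : PresW WC WD F} {hG : PresW WD WC G}
  (A : RelAdjunction WC WD F G hF hG)

noncomputable def unit : 𝟭 WC.Localization ⟶ descend WC WD F hF ⋙ descend WD WC G hG :=
  Localization.Construction.natTransExtension ((compQLoc WC WC).map A.β)

noncomputable def counit : descend WD WC G hG ⋙ descend WC WD F hF ⟶ 𝟭 WD.Localization :=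
  Localization.Construction.natTransExtension ((compQLoc WD WD).map A.α)

lemma unit_app (X : C) : A.unit.app (WC.Q.obj X) = ((compQLoc WC WC).map A.β).app X :=
  Localization.Construction.NatTransExtension.app_eq _ X

lemma counit_app (Y : D) : A.counit.app (WD.Q.obj Y) = ((compQLoc WD WD).map A.α).app Y :=
  Localization.Construction.NatTransExtension.app_eq _ Y

lemma left_triangle_app (X : C) :
    (descend WC WD F hF).map (A.unit.app (WC.Q.obj X)) ≫
      A.counit.app ((descend WC WD F hF).obj (WC.Q.obj X)) = 𝟙 _ := by
  have h := NatTrans.congr_app (congr_arg (compQLoc WC WD).map A.triangle_F) X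
  -- the objects the triangle composites pass through agree only after unfolding `descend`
  erw [CategoryTheory.Functor.map_comp, NatTrans.comp_app, compQLoc_map_postcompLoc_map_app,
    compQLoc_map_precompLoc_map_app, CategoryTheory.Functor.map_id] at h
  rw [unit_app]
  erw [counit_app]
  exact h

lemma right_triangle_app (Y : D) :
    A.unit.app ((descend WD WC G hG).obj (WD.Q.obj Y)) ≫
      (descend WD WC G hG).map (A.counit.app (WD.Q.obj Y)) = 𝟙 _ := by
  have h := NatTrans.congr_app (congr_arg (compQLoc WD WC).map A.triangle_G) Y
  erw [CategoryTheory.Functor.map_comp, NatTrans.comp_app, compQLoc_map_postcompLoc_map_app,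
    compQLoc_map_precompLoc_map_app, CategoryTheory.Functor.map_id] at h
  erw [unit_app]
  rw [counit_app]
  exact h

noncomputable def localization : descend WC WD F hF ⊣ descend WD WC G hG where
  unit := A.unit
  counit := A.counit
  left_triangle_components := by
    rintro ⟨⟨X⟩⟩
    exact A.left_triangle_app X
  right_triangle_components := by
    rintro ⟨⟨Y⟩⟩
    exact A.right_triangle_app Y

end RelAdjunction

theorem relAdjunction_localization_general {C D : Type*} [Category C] [Category D]
    (WC : MorphismProperty C) (WD : MorphismProperty D)
    (F : C ⥤ D) (G : D ⥤ C) (hF : PresW WC WD F) (hG : PresW WD WC G)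
    (A : RelAdjunction WC WD F G hF hG) :
    Nonempty ((descend WC WD F hF) ⊣ (descend WD WC G hG)) :=
  ⟨A.localization⟩

theorem relAdjunction_localization {C D : Type*} [Category C] [Category D]
    (WC : MorphismProperty C) (WD : MorphismProperty D)
    (hWC : Saturated WC) (hWD : Saturated WD)
    (F : C ⥤ D) (G : D ⥤ C) (hF : PresW WC WD F) (hG : PresW WD WC G)
    (A : RelAdjunction WC WD F G hF hG) :
    Nonempty ((descend WC WD F hF) ⊣ (descend WD WC G hG)) :=
  relAdjunction_localization_general WC WD F G hF hG A

end Paper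
end
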